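/- arXiv:1112.6296 — 3 statements merged into one kernel-verified Lean document; each statement's English description precedes it below -/
import Mathlib

section
/- Let w_1, …, w_k be a sorted edge family with k ≥ 3. Then every partial sum s_j (j = 1, …, k) is an extreme point of the polygon of the family, i.e. of the convex hull of {s_1, …, s_k} in ℝ²; in particular this convex hull is a (two-dimensional) convex polygon whose vertex set is exactly {s_1, …, s_k}. -/
/-!
Fix a vertex `s_j` and measure the edge angles cyclically from `w_j` on, so that
`w_{j+1}, …, w_k, w_1, …, w_j` have increasing angles in `(θ_j, θ_j + 2π]`; pick `φ` with all of
them in `(φ, φ + 2π)`. The functional `u ↦ u × e_φ` is negative on the edges of angle below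
`φ + π` and positive on those above. Each `s_i - s_j` is the sum of an initial run of this cyclic
sequence, and since the whole cycle sums to zero such a run has negative sum: either it stays
below `φ + π`, or the rest of the cycle lies above it. So `s_j` strictly maximises a linear
functional on the partial sums and is an extreme point of their hull. For the dimension, two of
`w_1, w_2, w_3` make an angle in `(0, π)`, hence span the plane, and every edge is a difference
of partial sums.
-/

/-- The argument in `[0, 2π)` of a vector of `ℝ²` (junk value for `0`). -/
noncomputable def argIn (u : ℝ × ℝ) : ℝ :=
  if 0 ≤ Complex.arg ⟨u.1, u.2⟩ then Complex.arg ⟨u.1, u.2⟩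
  else Complex.arg ⟨u.1, u.2⟩ + 2 * Real.pi

/-- A sorted edge family: a finite sequence of nonzero vectors of `ℝ²` summing to `0`,
whose arguments in `[0, 2π)` are strictly increasing. -/
def IsSortedEdgeFamily {k : ℕ} (w : Fin k → ℝ × ℝ) : Prop :=
  (∀ i, w i ≠ 0) ∧ (∑ i, w i = 0) ∧
  ∀ i j : Fin k, i < j → argIn (w i) < argIn (w j)

/-- The partial sums `s_j = w_1 + ⋯ + w_j` of an edge family. -/
noncomputable def partialSum {k : ℕ} (w : Fin k → ℝ × ℝ) (j : Fin k) : ℝ × ℝ :=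
  ∑ i ∈ Finset.Iic j, w i

open Real Finset

theorem sum_filter_le_neg_of_sign_change {ι β M : Type*} [LinearOrder β] [AddCommGroup M]
    [LinearOrder M] [IsOrderedAddMonoid M] {s : Finset ι} {x : ι → M} {α : ι → β} {c : β}
    (hsum : ∑ m ∈ s, x m = 0) (hneg : ∀ m ∈ s, α m < c → x m < 0)
    (hpos : ∀ m ∈ s, c < α m → 0 < x m) {i j : ι} (hi : i ∈ s) (hj : j ∈ s)
    (hij : α i < α j) :
    ∑ m ∈ s with α m ≤ α i, x m < 0 := by
  -- Either the run up to the threshold stays below `c`, or everything after it lies above `c`.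
  by_cases h : ∀ m ∈ s, α m ≤ α i → α m < c
  · refine sum_neg (fun m hm => ?_) ⟨i, mem_filter.2 ⟨hi, le_rfl⟩⟩
    obtain ⟨hm, hmi⟩ := mem_filter.1 hm
    exact hneg m hm (h m hm hmi)
  · push Not at h
    obtain ⟨m₀, -, hm₀i, hcm₀⟩ := h
    have hrest : 0 < ∑ m ∈ s with ¬α m ≤ α i, x m := by
      refine sum_pos (fun m hm => ?_) ⟨j, mem_filter.2 ⟨hj, hij.not_ge⟩⟩
      obtain ⟨hm, hmi⟩ := mem_filter.1 hm
      exact hpos m hm (hcm₀.trans_lt (hm₀i.trans_lt (not_le.1 hmi)))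
    rw [← sum_filter_add_sum_filter_not s (fun m => α m ≤ α i), add_eq_zero_iff_eq_neg] at hsum
    exact hsum ▸ neg_neg_of_pos hrest

section ExtremePoints

variable {𝕜 E : Type*} [Field 𝕜] [LinearOrder 𝕜] [IsStrictOrderedRing 𝕜] [AddCommGroup E]
  [Module 𝕜 E]

theorem convex_setOf_lt_or_eq (l : E →ₗ[𝕜] 𝕜) (x : E) :
    Convex 𝕜 {y | l y < l x ∨ y = x} := by
  have key : ∀ y, l y < l x → ∀ a b : 𝕜, 0 ≤ a → 0 ≤ b → a + b = 1 →
      l (a • y + b • x) < l x ∨ a • y + b • x = x := by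
    intro y hy a b ha hb hab
    rcases ha.eq_or_lt with rfl | ha
    · right; simp [(zero_add b).symm.trans hab]
    · left
      rw [map_add, map_smul, map_smul, smul_eq_mul, smul_eq_mul]
      linarith [mul_lt_mul_of_pos_left hy ha, congrArg (· * l x) hab]
  intro y₁ h₁ y₂ h₂ a b ha hb hab
  rcases h₁ with h₁ | rfl <;> rcases h₂ with h₂ | rfl
  · exact Or.inl (convex_halfSpace_lt l.isLinear _ h₁ h₂ ha hb hab)
  · exact key y₁ h₁ a b ha hb hab
  · rw [add_comm]; exact key y₂ h₂ b a hb ha ((add_comm b a).trans hab)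
  · exact Or.inr (Convex.combo_self hab _)

theorem mem_extremePoints_convexHull_of_forall_lt {S : Set E} {x : E} (hx : x ∈ S)
    (l : E →ₗ[𝕜] 𝕜) (hl : ∀ y ∈ S, y ≠ x → l y < l x) :
    x ∈ (convexHull 𝕜 S).extremePoints 𝕜 := by
  have hS : convexHull 𝕜 S ⊆ {y | l y < l x ∨ y = x} :=
    convexHull_min (fun y hy => (eq_or_ne y x).symm.imp_left (hl y hy))
      (convex_setOf_lt_or_eq l x)
  have hle : ∀ y ∈ convexHull 𝕜 S, l y ≤ l x := fun y hy =>
    (hS hy).elim le_of_lt fun h => h ▸ le_rfl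
  refine ⟨subset_convexHull 𝕜 S hx, fun y₁ hy₁ y₂ hy₂ ⟨a, b, ha, hb, hab, hxy⟩ => ?_⟩
  have hcomb : a * l y₁ + b * l y₂ = l x := by
    rw [← hxy, map_add, map_smul, map_smul, smul_eq_mul, smul_eq_mul]
  refine (hS hy₁).resolve_left fun h₁ => ?_
  linarith [mul_lt_mul_of_pos_left h₁ ha, mul_le_mul_of_nonneg_left (hle y₂ hy₂) hb.le,
    congrArg (· * l x) hab]

end ExtremePoints

theorem argIn_nonneg (u : ℝ × ℝ) : 0 ≤ argIn u := by
  unfold argIn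
  split_ifs with h
  · exact h
  · linarith [Complex.neg_pi_lt_arg (⟨u.1, u.2⟩ : ℂ), pi_pos]

theorem argIn_lt_two_pi (u : ℝ × ℝ) : argIn u < 2 * π := by
  unfold argIn
  split_ifs with h <;> linarith [Complex.arg_le_pi (⟨u.1, u.2⟩ : ℂ), pi_pos]

theorem norm_mul_cos_argIn (u : ℝ × ℝ) : ‖(⟨u.1, u.2⟩ : ℂ)‖ * cos (argIn u) = u.1 := by
  unfold argIn
  split_ifs <;> simp only [cos_add_two_pi, Complex.norm_mul_cos_arg]

theorem norm_mul_sin_argIn (u : ℝ × ℝ) : ‖(⟨u.1, u.2⟩ : ℂ)‖ * sin (argIn u) = u.2 := by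
  unfold argIn
  split_ifs <;> simp only [sin_add_two_pi, Complex.norm_mul_sin_arg]

theorem norm_mk_pos_of_ne_zero {u : ℝ × ℝ} (hu : u ≠ 0) : 0 < ‖(⟨u.1, u.2⟩ : ℂ)‖ :=
  norm_pos_iff.2 fun h => hu (Prod.ext (congrArg Complex.re h) (congrArg Complex.im h))

theorem cross_eq_norm_mul_norm_mul_sin (u v : ℝ × ℝ) :
    u.1 * v.2 - u.2 * v.1 =
      ‖(⟨u.1, u.2⟩ : ℂ)‖ * ‖(⟨v.1, v.2⟩ : ℂ)‖ * sin (argIn v - argIn u) := by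
  have hu₁ := norm_mul_cos_argIn u
  have hu₂ := norm_mul_sin_argIn u
  have hv₁ := norm_mul_cos_argIn v
  have hv₂ := norm_mul_sin_argIn v
  generalize ‖(⟨u.1, u.2⟩ : ℂ)‖ = r at *
  generalize ‖(⟨v.1, v.2⟩ : ℂ)‖ = r' at *
  rw [sin_sub, ← hu₁, ← hu₂, ← hv₁, ← hv₂]
  ring

/-- The cross product `u × (cos φ, sin φ)`. -/
noncomputable def crossUnit (φ : ℝ) : ℝ × ℝ →ₗ[ℝ] ℝ :=
  sin φ • LinearMap.fst ℝ ℝ ℝ - cos φ • LinearMap.snd ℝ ℝ ℝ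

theorem crossUnit_eq_norm_mul_sin (φ : ℝ) (u : ℝ × ℝ) :
    crossUnit φ u = ‖(⟨u.1, u.2⟩ : ℂ)‖ * sin (φ - argIn u) := by
  have hu₁ := norm_mul_cos_argIn u
  have hu₂ := norm_mul_sin_argIn u
  generalize ‖(⟨u.1, u.2⟩ : ℂ)‖ = r at *
  simp only [crossUnit, LinearMap.sub_apply, LinearMap.smul_apply, LinearMap.fst_apply,
    LinearMap.snd_apply, smul_eq_mul]
  rw [sin_sub, ← hu₁, ← hu₂]
  ring

theorem span_pair_eq_top_of_cross_ne_zero {u v : ℝ × ℝ} (h : u.1 * v.2 - u.2 * v.1 ≠ 0) :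
    Submodule.span ℝ {u, v} = ⊤ := by
  refine eq_top_iff.2 fun x _ => Submodule.mem_span_pair.2
    ⟨(x.1 * v.2 - x.2 * v.1) / (u.1 * v.2 - u.2 * v.1),
      (u.1 * x.2 - u.2 * x.1) / (u.1 * v.2 - u.2 * v.1), ?_⟩
  ext <;> simp only [Prod.fst_add, Prod.snd_add, Prod.smul_fst, Prod.smul_snd, smul_eq_mul] <;>
    rw [div_mul_eq_mul_div, div_mul_eq_mul_div, ← add_div, div_eq_iff h] <;> ring

/-- Listed cyclically from just after `j`, the indices get increasing unwrapped angles, lying in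
`(θ j, θ j + 2π]` when `θ` is strictly monotone with values in `[0, 2π)`. -/
noncomputable def unwrapAngle {ι : Type*} [LinearOrder ι] (θ : ι → ℝ) (j m : ι) : ℝ :=
  θ m + if m ≤ j then 2 * π else 0

section Unwrap

variable {ι : Type*} [LinearOrder ι] {θ : ι → ℝ}

theorem unwrapAngle_self (j : ι) : unwrapAngle θ j j = θ j + 2 * π := by
  simp [unwrapAngle]

theorem lt_unwrapAngle (hθ : StrictMono θ) (h0 : ∀ m, 0 ≤ θ m) (h2π : ∀ m, θ m < 2 * π)
    (j m : ι) : θ j < unwrapAngle θ j m := by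
  unfold unwrapAngle
  split_ifs with hm
  · linarith [h0 m, h2π j]
  · linarith [hθ (not_le.1 hm)]

theorem unwrapAngle_lt_unwrapAngle_self (hθ : StrictMono θ) (h0 : ∀ m, 0 ≤ θ m)
    (h2π : ∀ m, θ m < 2 * π) {j m : ι} (hm : m ≠ j) :
    unwrapAngle θ j m < unwrapAngle θ j j := by
  rw [unwrapAngle_self, unwrapAngle]
  split_ifs with hmj
  · linarith [hθ (lt_of_le_of_ne hmj hm)]
  · linarith [h0 j, h2π m]

theorem exists_unwrapAngle_mem_Ioo [Finite ι] (hθ : StrictMono θ) (h0 : ∀ m, 0 ≤ θ m)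
    (h2π : ∀ m, θ m < 2 * π) (j : ι) :
    ∃ φ, ∀ m, unwrapAngle θ j m ∈ Set.Ioo φ (φ + 2 * π) := by
  obtain ⟨φ, hjφ, hφ⟩ := (Set.finite_singleton (θ j)).exists_between'
    (Set.finite_range (unwrapAngle θ j))
    (by simpa [Set.forall_mem_range] using lt_unwrapAngle hθ h0 h2π j)
  refine ⟨φ, fun m => ⟨hφ _ ⟨m, rfl⟩, ?_⟩⟩
  have hj : unwrapAngle θ j j < φ + 2 * π := by
    rw [unwrapAngle_self]; linarith [hjφ _ rfl]
  rcases eq_or_ne m j with rfl | hm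
  · exact hj
  · exact (unwrapAngle_lt_unwrapAngle_self hθ h0 h2π hm).trans hj

theorem sin_sub_unwrapAngle (φ : ℝ) (j m : ι) :
    sin (φ - unwrapAngle θ j m) = sin (φ - θ m) := by
  unfold unwrapAngle
  split_ifs
  · rw [sub_add_eq_sub_sub, sin_sub_two_pi]
  · rw [add_zero]

/-- The indices of unwrapped angle at most that of `i` form the cyclic interval `(j, i]`. -/
theorem ite_unwrapAngle_le {M : Type*} [AddCommGroup M] (hθ : StrictMono θ)
    (h0 : ∀ m, 0 ≤ θ m) (h2π : ∀ m, θ m < 2 * π) (i j m : ι) (v : M) :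
    (if unwrapAngle θ j m ≤ unwrapAngle θ j i then v else 0) =
      (if m ≤ i then v else 0) - (if m ≤ j then v else 0) + (if i ≤ j then v else 0) := by
  have hmi := hθ.le_iff_le (a := m) (b := i)
  have := h0 m; have := h0 i; have := h2π m; have := h2π i
  unfold unwrapAngle
  split_ifs <;> first | (exfalso; grind) | abel

end Unwrap

section SortedEdgeFamily

variable {k : ℕ} {w : Fin k → ℝ × ℝ}

theorem partialSum_sub_partialSum_eq_sum_filter (hsum : ∑ i, w i = 0)
    (hθ : StrictMono (argIn ∘ w)) (i j : Fin k) :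
    partialSum w i - partialSum w j =
      ∑ m with unwrapAngle (argIn ∘ w) j m ≤ unwrapAngle (argIn ∘ w) j i, w m := by
  rw [sum_filter]
  simp_rw [ite_unwrapAngle_le hθ (fun m => argIn_nonneg _) (fun m => argIn_lt_two_pi _)]
  rw [sum_add_distrib, sum_sub_distrib, ← sum_filter, ← sum_filter, filter_ge_eq_Iic,
    filter_ge_eq_Iic]
  split_ifs <;> simp [hsum, partialSum]

theorem mem_vectorSpan_range_partialSum (hsum : ∑ i, w i = 0) (m : Fin k) :
    w m ∈ vectorSpan ℝ (Set.range (partialSum w)) := by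
  rw [← add_sub_cancel_left (∑ i ∈ Iio m, w i) (w m), sum_Iio_add_eq_sum_Iic]
  rcases m with ⟨_ | t, hm⟩
  · have hlast : partialSum w ⟨k - 1, by omega⟩ = 0 := by
      rw [partialSum, ← hsum]
      congr 1
      ext i; simp only [mem_Iic, Fin.le_iff_val_le_val, mem_univ, iff_true]; omega
    have hIio : Iio (⟨0, hm⟩ : Fin k) = ∅ := by ext i; simp [Fin.lt_def]
    rw [hIio, sum_empty, ← hlast]
    exact vsub_mem_vectorSpan ℝ (Set.mem_range_self _) (Set.mem_range_self _)
  · have hIio : Iio (⟨t + 1, hm⟩ : Fin k) = Iic ⟨t, by omega⟩ := by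
      ext i; simp [Fin.lt_def, Fin.le_iff_val_le_val]
    rw [hIio]
    exact vsub_mem_vectorSpan ℝ (Set.mem_range_self _) (Set.mem_range_self _)

theorem exists_crossUnit_partialSum_lt (hw : IsSortedEdgeFamily w) (j : Fin k) :
    ∃ φ, ∀ i ≠ j, crossUnit φ (partialSum w i) < crossUnit φ (partialSum w j) := by
  obtain ⟨hne, hsum, hθ'⟩ := hw
  have hθ : StrictMono (argIn ∘ w) := fun a b h => hθ' a b h
  have h0 : ∀ m, 0 ≤ (argIn ∘ w) m := fun m => argIn_nonneg _
  have h2π : ∀ m, (argIn ∘ w) m < 2 * π := fun m => argIn_lt_two_pi _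
  set α := unwrapAngle (argIn ∘ w) j
  obtain ⟨φ, hφ⟩ := exists_unwrapAngle_mem_Ioo hθ h0 h2π j
  have hx : ∀ m, crossUnit φ (w m) = ‖(⟨(w m).1, (w m).2⟩ : ℂ)‖ * sin (φ - α m) := fun m => by
    rw [crossUnit_eq_norm_mul_sin, sin_sub_unwrapAngle, Function.comp_apply]
  refine ⟨φ, fun i hi => ?_⟩
  have key := sum_filter_le_neg_of_sign_change (x := fun m => crossUnit φ (w m)) (α := α)
    (c := φ + π) (by rw [← map_sum, hsum, map_zero])
    (fun m _ hm => by
      rw [hx]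
      exact mul_neg_of_pos_of_neg (norm_mk_pos_of_ne_zero (hne m))
        (sin_neg_of_neg_of_neg_pi_lt (by linarith [(hφ m).1]) (by linarith)))
    (fun m _ hm => by
      rw [hx, ← sin_add_two_pi]
      exact mul_pos (norm_mk_pos_of_ne_zero (hne m))
        (sin_pos_of_pos_of_lt_pi (by linarith [(hφ m).2]) (by linarith)))
    (mem_univ i) (mem_univ j) (unwrapAngle_lt_unwrapAngle_self hθ h0 h2π hi)
  rw [← map_sum, ← partialSum_sub_partialSum_eq_sum_filter hsum hθ, map_sub] at key
  linarith

theorem affineSpan_range_partialSum_eq_top (hk : 3 ≤ k) (hw : IsSortedEdgeFamily w) :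
    affineSpan ℝ (Set.range (partialSum w)) = ⊤ := by
  obtain ⟨hne, hsum, hθ⟩ := hw
  obtain ⟨a, b, hab, hba⟩ : ∃ a b : Fin k, 0 < argIn (w b) - argIn (w a) ∧
      argIn (w b) - argIn (w a) < π := by
    let i₀ : Fin k := ⟨0, by omega⟩
    let i₁ : Fin k := ⟨1, by omega⟩
    let i₂ : Fin k := ⟨2, by omega⟩
    have h₀₁ := hθ i₀ i₁ (by simp [i₀, i₁, Fin.lt_def])
    have h₁₂ := hθ i₁ i₂ (by simp [i₁, i₂, Fin.lt_def])
    have h₀ := argIn_nonneg (w i₀)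
    have h₂ := argIn_lt_two_pi (w i₂)
    by_cases h : argIn (w i₁) - argIn (w i₀) < π
    · exact ⟨i₀, i₁, by linarith, h⟩
    · exact ⟨i₁, i₂, by linarith, by linarith⟩
  have hcross : (w a).1 * (w b).2 - (w a).2 * (w b).1 ≠ 0 := by
    rw [cross_eq_norm_mul_norm_mul_sin]
    exact (mul_pos (mul_pos (norm_mk_pos_of_ne_zero (hne a)) (norm_mk_pos_of_ne_zero (hne b)))
      (sin_pos_of_pos_of_lt_pi hab hba)).ne'
  rw [AffineSubspace.affineSpan_eq_top_iff_vectorSpan_eq_top_of_nonempty _ _ _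
    ⟨_, Set.mem_range_self a⟩, eq_top_iff, ← span_pair_eq_top_of_cross_ne_zero hcross,
    Submodule.span_le, Set.pair_subset_iff]
  exact ⟨mem_vectorSpan_range_partialSum hsum a, mem_vectorSpan_range_partialSum hsum b⟩

end SortedEdgeFamily

/-- For a sorted edge family with `k ≥ 3`, every partial sum is an extreme point of the
polygon of the family (the convex hull of the partial sums); in particular the set of
extreme points (the vertex set) is exactly the set of partial sums, and the polygon is
two-dimensional. -/
theorem partialSum_mem_extremePoints {k : ℕ} (hk : 3 ≤ k) (w : Fin k → ℝ × ℝ)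
    (hw : IsSortedEdgeFamily w) :
    (∀ j : Fin k, partialSum w j ∈
        Set.extremePoints ℝ (convexHull ℝ (Set.range (partialSum w)))) ∧
    Set.extremePoints ℝ (convexHull ℝ (Set.range (partialSum w))) =
      Set.range (partialSum w) ∧
    affineSpan ℝ (Set.range (partialSum w)) = ⊤ := by
  have hext : ∀ j, partialSum w j ∈
      Set.extremePoints ℝ (convexHull ℝ (Set.range (partialSum w))) := fun j => by
    obtain ⟨φ, hφ⟩ := exists_crossUnit_partialSum_lt hw j
    refine mem_extremePoints_convexHull_of_forall_lt (Set.mem_range_self j) (crossUnit φ) ?_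
    rintro _ ⟨i, rfl⟩ hi
    exact hφ i (ne_of_apply_ne _ hi)
  exact ⟨hext, extremePoints_convexHull_subset.antisymm (Set.range_subset_iff.2 hext),
    affineSpan_range_partialSum_eq_top hk hw⟩
end

section
/- Let P and Q be the convex hulls of two nonempty finite subsets of ℝ², and let vol denote two-dimensional Lebesgue measure. Then vol(P + Q) ≥ vol(P) + vol(Q), where P + Q = { a + b : a ∈ P, b ∈ Q } is the Minkowski sum. Moreover, equality holds if and only if P is a singleton, or Q is a singleton, or there exist a nonzero vector u ∈ ℝ² and points a, b ∈ ℝ² with P ⊆ a + ℝ·u and Q ⊆ b + ℝ·u (i.e. P and Q are contained in parallel lines). -/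
/-!
If a linear functional `ℓ` attains its maximum on `P` at `p` and its minimum on `Q` at `q`, then
`P + q` and `p + Q` lie in `P + Q` on the two sides of the line `ℓ = ℓ p + ℓ q`, which is null;
this gives the inequality. If `P` is a polygon that is not a point, `ℓ` can be chosen to attain
its maximum on `P` along an edge `[v, w]`; then `P + Q` contains `P + q` and `(v + Q) ∪ (w + Q)`,
and when `Q` has positive area the latter is strictly larger than `Q`. So in the equality case
either one polygon is a point or both are null; then `P + Q` is a null convex set, hence lies in
a line, and `P` and `Q` lie in parallel lines.
-/

open Pointwise MeasureTheory Set
open scoped ENNReal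

lemma Submodule.exists_le_span_singleton_of_ne_top {K V : Type*} [Field K] [AddCommGroup V]
    [Module K V] (hV : Module.finrank K V = 2) {W : Submodule K V} (hW : W ≠ ⊤) :
    ∃ u ≠ 0, W ≤ K ∙ u := by
  have : FiniteDimensional K V := Module.finite_of_finrank_eq_succ hV
  rcases eq_or_ne W ⊥ with rfl | hbot
  · have : Nontrivial V := Module.nontrivial_of_finrank_eq_succ hV
    obtain ⟨u, hu⟩ := exists_ne (0 : V)
    exact ⟨u, hu, bot_le⟩
  obtain ⟨u, huW, hu⟩ := W.exists_mem_ne_zero_of_ne_bot hbot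
  refine ⟨u, hu, (Submodule.eq_of_le_of_finrank_le ((span_singleton_le_iff_mem u W).2 huW) ?_).ge⟩
  have := Submodule.finrank_lt hW
  rw [finrank_span_singleton hu]
  omega

section Haar

variable {E : Type*} [NormedAddCommGroup E] [NormedSpace ℝ E] [MeasurableSpace E] [BorelSpace E]
  [FiniteDimensional ℝ E] (μ : Measure E) [μ.IsAddHaarMeasure]

lemma measure_preimage_singleton_eq_zero {ℓ : E →L[ℝ] ℝ} (hℓ : ℓ ≠ 0) (c : ℝ) :
    μ (ℓ ⁻¹' {c}) = 0 := by
  obtain ⟨y, hy⟩ := ℓ.exists_ne_zero hℓ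
  have hker : LinearMap.ker (ℓ : E →ₗ[ℝ] ℝ) ≠ ⊤ := fun h =>
    hy (LinearMap.mem_ker.1 (h ▸ Submodule.mem_top : y ∈ LinearMap.ker (ℓ : E →ₗ[ℝ] ℝ)))
  have hlevel : ℓ ⁻¹' {c} = (· + -((c / ℓ y) • y)) ⁻¹' LinearMap.ker (ℓ : E →ₗ[ℝ] ℝ) := by
    ext x
    simp [hy, add_neg_eq_zero]
  rw [hlevel, measure_preimage_add_right]
  exact Measure.addHaar_submodule μ _ hker

lemma measure_add_measure_le_measure_union_of_separated {ℓ : E →L[ℝ] ℝ} (hℓ : ℓ ≠ 0)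
    {A B : Set E} {c : ℝ} (hA : ∀ x ∈ A, ℓ x ≤ c) (hB : ∀ x ∈ B, c ≤ ℓ x) :
    μ A + μ B ≤ μ (A ∪ B) := by
  have hbelow : MeasurableSet {x | ℓ x < c} := measurableSet_lt ℓ.measurable measurable_const
  calc μ A + μ B = μ (A \ ℓ ⁻¹' {c}) + μ B := by
        rw [measure_sdiff_null (measure_preimage_singleton_eq_zero μ hℓ c)]
    _ ≤ μ ((A ∪ B) ∩ {x | ℓ x < c}) + μ ((A ∪ B) \ {x | ℓ x < c}) := by
        gcongr
        · exact fun x ⟨hxA, hxc⟩ => ⟨Or.inl hxA, lt_of_le_of_ne (hA x hxA) hxc⟩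
        · exact fun x hxB => ⟨Or.inr hxB, not_lt.2 (hB x hxB)⟩
    _ = μ (A ∪ B) := measure_inter_add_sdiff _ hbelow

lemma measure_add_le_measure_add_of_separated {ℓ : E →L[ℝ] ℝ} (hℓ : ℓ ≠ 0)
    {P Q B : Set E} {c : ℝ} {q : E} (hP : ∀ x ∈ P, ℓ x ≤ c) (hq : q ∈ Q) (hBPQ : B ⊆ P + Q)
    (hB : ∀ x ∈ B, c + ℓ q ≤ ℓ x) :
    μ P + μ B ≤ μ (P + Q) :=
  calc μ P + μ B = μ (q +ᵥ P) + μ B := by rw [measure_vadd]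
    _ ≤ μ ((q +ᵥ P) ∪ B) := by
        refine measure_add_measure_le_measure_union_of_separated μ hℓ ?_ hB
        rintro _ ⟨x, hx, rfl⟩
        simp only [vadd_eq_add, map_add]
        linarith [hP x hx]
    _ ≤ μ (P + Q) := measure_mono (union_subset (add_comm Q P ▸ vadd_set_subset_add hq) hBPQ)

theorem measure_add_le_measure_add [Nontrivial E] {P Q : Set E} (hP : IsCompact P)
    (hQ : IsCompact Q) (hPne : P.Nonempty) (hQne : Q.Nonempty) :
    μ P + μ Q ≤ μ (P + Q) := by
  obtain ⟨y, hy⟩ := exists_ne (0 : E)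
  obtain ⟨ℓ, hℓy⟩ := SeparatingDual.exists_ne_zero (R := ℝ) hy
  have hℓ : ℓ ≠ 0 := fun h => hℓy (by simp [h])
  obtain ⟨p, hp, hpmax⟩ := hP.exists_isMaxOn hPne ℓ.continuous.continuousOn
  obtain ⟨q, hq, hqmin⟩ := hQ.exists_isMinOn hQne ℓ.continuous.continuousOn
  calc μ P + μ Q = μ P + μ (p +ᵥ Q) := by rw [measure_vadd]
    _ ≤ μ (P + Q) := by
        refine measure_add_le_measure_add_of_separated μ hℓ (fun x hx => hpmax hx) hq
          (vadd_set_subset_add hp) ?_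
        rintro _ ⟨y, hy, rfl⟩
        simpa using hqmin hy

lemma Convex.interior_nonempty_iff_measure_ne_zero {s : Set E} (hs : Convex ℝ s) :
    (interior s).Nonempty ↔ μ s ≠ 0 := by
  refine ⟨fun h => ((isOpen_interior.measure_pos μ h).trans_le
    (measure_mono interior_subset)).ne', fun h => ?_⟩
  rw [hs.interior_nonempty_iff_affineSpan_eq_top]
  by_contra hspan
  exact h (measure_mono_null (subset_affineSpan ℝ s) (Measure.addHaar_affineSubspace μ _ hspan))

lemma measure_lt_measure_vadd_union_vadd {K : Set E} (hK : IsCompact K) (hKc : Convex ℝ K)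
    (hKi : (interior K).Nonempty) {v w : E} (hvw : v ≠ w) :
    μ K < μ ((v +ᵥ K) ∪ (w +ᵥ K)) := by
  obtain ⟨u, rfl⟩ : ∃ u, w = v + u := ⟨w - v, (add_sub_cancel v w).symm⟩
  rw [← vadd_vadd, ← vadd_set_union, measure_vadd]
  obtain ⟨ℓ, hℓu⟩ := SeparatingDual.exists_eq_one (R := ℝ) (by simpa using hvw : u ≠ 0)
  obtain ⟨m, hm, hmax⟩ := hK.exists_isMaxOn (hKi.mono interior_subset) ℓ.continuous.continuousOn
  set C := K ∩ {x | ℓ m - 1 < ℓ x}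
  have hupper : IsOpen {x | ℓ m - 1 < ℓ x} := isOpen_lt continuous_const ℓ.continuous
  -- `m` is a limit of interior points, so `C` contains a nonempty open set
  have hC : 0 < μ C := by
    have hm' : m ∈ closure (interior K) := by
      rw [hKc.closure_interior_eq_closure_of_nonempty_interior hKi]
      exact subset_closure hm
    obtain ⟨z, hz, hzK⟩ := mem_closure_iff.1 hm' _ hupper (by simp)
    exact ((isOpen_interior.inter hupper).measure_pos μ ⟨z, hzK, hz⟩).trans_le
      (measure_mono (inter_subset_inter_left _ interior_subset))
  have hℓ : ℓ ≠ 0 := fun h => by simp [h] at hℓu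
  calc μ K < μ K + μ C := ENNReal.lt_add_right hK.measure_lt_top.ne hC.ne'
    _ = μ K + μ (u +ᵥ C) := by rw [measure_vadd]
    _ ≤ μ (K ∪ (u +ᵥ C)) := by
        refine measure_add_measure_le_measure_union_of_separated μ hℓ (c := ℓ m)
          (fun x hx => hmax hx) ?_
        rintro _ ⟨x, hx, rfl⟩
        simp only [vadd_eq_add, map_add, hℓu]
        linarith [hx.2.out]
    _ ≤ μ (K ∪ (u +ᵥ K)) := by gcongr; exact inter_subset_left

lemma measure_add_lt_measure_add_of_isMaxOn {ℓ : E →L[ℝ] ℝ} (hℓ : ℓ ≠ 0) {X K : Set E}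
    (hX : μ X ≠ ∞) (hK : IsCompact K) (hKc : Convex ℝ K) (hK0 : μ K ≠ 0) {v w : E}
    (hv : v ∈ X) (hw : w ∈ X) (hvw : v ≠ w) (hvmax : IsMaxOn ℓ X v) (hwv : ℓ w = ℓ v) :
    μ X + μ K < μ (X + K) := by
  have hKi := (hKc.interior_nonempty_iff_measure_ne_zero μ).2 hK0
  obtain ⟨k, hk, hkmin⟩ := hK.exists_isMinOn (hKi.mono interior_subset) ℓ.continuous.continuousOn
  calc μ X + μ K < μ X + μ ((v +ᵥ K) ∪ (w +ᵥ K)) :=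
        ENNReal.add_lt_add_left hX (measure_lt_measure_vadd_union_vadd μ hK hKc hKi hvw)
    _ ≤ μ (X + K) := by
        refine measure_add_le_measure_add_of_separated μ hℓ (fun x hx => hvmax hx) hk
          (union_subset (vadd_set_subset_add hv) (vadd_set_subset_add hw)) ?_
        rintro _ (⟨y, hy, rfl⟩ | ⟨y, hy, rfl⟩) <;> simpa [hwv] using hkmin hy

lemma measure_line_eq_zero (hE : 2 ≤ Module.finrank ℝ E) (a u : E) :
    μ {x | ∃ r : ℝ, x = a + r • u} = 0 := by
  have hspan : ℝ ∙ u ≠ ⊤ := by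
    refine (span_lt_top_of_card_lt_finrank ?_).ne
    simp only [toFinset_singleton, Finset.card_singleton]
    omega
  have hline : {x | ∃ r : ℝ, x = a + r • u} = (· + -a) ⁻¹' (ℝ ∙ u) := by
    ext x
    simp [Submodule.mem_span_singleton, eq_comm, ← sub_eq_add_neg, eq_sub_iff_add_eq, add_comm]
  rw [hline, measure_preimage_add_right]
  exact Measure.addHaar_submodule μ _ hspan

lemma measure_add_eq_of_subset_parallel_lines (hE : 2 ≤ Module.finrank ℝ E) {P Q : Set E}
    {a b u : E} (hP : P ⊆ {x | ∃ r : ℝ, x = a + r • u}) (hQ : Q ⊆ {x | ∃ r : ℝ, x = b + r • u}) :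
    μ (P + Q) = μ P + μ Q := by
  have hPQ : P + Q ⊆ {x | ∃ r : ℝ, x = (a + b) + r • u} := by
    rintro _ ⟨x, hx, y, hy, rfl⟩
    obtain ⟨r, rfl⟩ := hP hx
    obtain ⟨s, rfl⟩ := hQ hy
    exact ⟨r + s, by rw [add_smul, add_add_add_comm]⟩
  rw [measure_mono_null hP (measure_line_eq_zero μ hE a u),
    measure_mono_null hQ (measure_line_eq_zero μ hE b u),
    measure_mono_null hPQ (measure_line_eq_zero μ hE _ u), add_zero]

lemma exists_subset_parallel_lines_of_measure_add_eq_zero (hE : Module.finrank ℝ E = 2)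
    {P Q : Set E} (hPQ : Convex ℝ (P + Q)) (h0 : μ (P + Q) = 0) {p q : E} (hp : p ∈ P)
    (hq : q ∈ Q) :
    ∃ u : E, u ≠ 0 ∧
      P ⊆ {x | ∃ r : ℝ, x = p + r • u} ∧ Q ⊆ {x | ∃ r : ℝ, x = q + r • u} := by
  have hpq : p + q ∈ affineSpan ℝ (P + Q) := subset_affineSpan ℝ _ (add_mem_add hp hq)
  have hspan : (affineSpan ℝ (P + Q)).direction ≠ ⊤ := by
    rw [Ne, AffineSubspace.direction_eq_top_iff_of_nonempty ⟨_, hpq⟩,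
      ← hPQ.interior_nonempty_iff_affineSpan_eq_top, hPQ.interior_nonempty_iff_measure_ne_zero μ,
      h0, ne_eq, not_not]
  obtain ⟨u, hu, hle⟩ := Submodule.exists_le_span_singleton_of_ne_top hE hspan
  have hsum : ∀ x ∈ P, ∀ y ∈ Q, ∃ r : ℝ, x + y = p + q + r • u := fun x hx y hy => by
    obtain ⟨r, hr⟩ := Submodule.mem_span_singleton.1 <| hle <|
      AffineSubspace.vsub_mem_direction (subset_affineSpan ℝ _ (add_mem_add hx hy)) hpq
    exact ⟨r, by rw [hr, vsub_eq_sub, add_sub_cancel]⟩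
  refine ⟨u, hu, fun x hx => ?_, fun y hy => ?_⟩
  · obtain ⟨r, hr⟩ := hsum x hx q hq
    exact ⟨r, add_right_cancel (b := q) (by rw [hr, add_right_comm])⟩
  · obtain ⟨r, hr⟩ := hsum p hp y hy
    exact ⟨r, add_left_cancel (a := p) (by rw [hr, add_assoc])⟩

end Haar

lemma Finset.exists_two_maximizers (S : Finset (ℝ × ℝ)) (hS : (S : Set (ℝ × ℝ)).Nontrivial) :
    ∃ ℓ : ℝ × ℝ →L[ℝ] ℝ, ℓ ≠ 0 ∧
      ∃ v ∈ S, ∃ w ∈ S, v ≠ w ∧ ℓ w = ℓ v ∧ ∀ s ∈ S, ℓ s ≤ ℓ v := by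
  obtain ⟨v, hv, hvmax⟩ := S.exists_max_image Prod.fst (Finset.coe_nonempty.1 hS.nonempty)
  by_cases htie : ∃ w ∈ S, w ≠ v ∧ w.1 = v.1
  · obtain ⟨w, hw, hwv, hw1⟩ := htie
    refine ⟨ContinuousLinearMap.fst ℝ ℝ ℝ, fun h => ?_, v, hv, w, hw, hwv.symm, hw1, hvmax⟩
    simpa using congrArg (· (1, 0)) h
  push Not at htie
  have hleft : ∀ s ∈ S, s ≠ v → 0 < v.1 - s.1 := fun s hs hsv =>
    sub_pos.2 ((hvmax s hs).lt_of_ne (htie s hs hsv))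
  -- `v` is the unique rightmost point; `w` is the point of steepest slope seen from `v`
  obtain ⟨w, hw, hwmax⟩ := (S.erase v).exists_max_image (fun s => (s.2 - v.2) / (v.1 - s.1))
    (by obtain ⟨s, hs, hsv⟩ := hS.exists_ne v; exact ⟨s, Finset.mem_erase.2 ⟨hsv, hs⟩⟩)
  obtain ⟨hwv, hwS⟩ := Finset.mem_erase.1 hw
  set ℓ := (w.2 - v.2) • ContinuousLinearMap.fst ℝ ℝ ℝ + (v.1 - w.1) • ContinuousLinearMap.snd ℝ ℝ ℝ
  have hℓ (x : ℝ × ℝ) : ℓ x = (w.2 - v.2) * x.1 + (v.1 - w.1) * x.2 := rfl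
  refine ⟨ℓ, fun h => ?_, v, hv, w, hwS, hwv.symm, by rw [hℓ, hℓ]; ring, fun s hs => ?_⟩
  · have := hℓ (0, 1)
    rw [h, zero_apply] at this
    linarith [hleft w hwS hwv]
  · rcases eq_or_ne s v with rfl | hsv
    · exact le_rfl
    have hslope := hwmax s (Finset.mem_erase.2 ⟨hsv, hs⟩)
    rw [div_le_div_iff₀ (hleft s hs hsv) (hleft w hwS hwv)] at hslope
    rw [hℓ, hℓ]
    linarith

lemma volume_convexHull_add_lt {S : Finset (ℝ × ℝ)}
    (hS : (convexHull ℝ (S : Set (ℝ × ℝ))).Nontrivial) {K : Set (ℝ × ℝ)} (hK : IsCompact K)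
    (hKc : Convex ℝ K) (hK0 : volume K ≠ 0) :
    volume (convexHull ℝ (S : Set (ℝ × ℝ))) + volume K <
      volume (convexHull ℝ (S : Set (ℝ × ℝ)) + K) := by
  have hS' : (S : Set (ℝ × ℝ)).Nontrivial := by
    by_contra h
    rw [not_nontrivial_iff] at h
    rw [(h.convex (𝕜 := ℝ)).convexHull_eq] at hS
    exact hS.not_subsingleton h
  obtain ⟨ℓ, hℓ, v, hv, w, hw, hvw, hwv, hmax⟩ := S.exists_two_maximizers hS'
  have hvmax : IsMaxOn ℓ (convexHull ℝ (S : Set (ℝ × ℝ))) v :=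
    isMaxOn_iff.2 (convexHull_min (𝕜 := ℝ) hmax (convex_halfSpace_le ℓ.toLinearMap.isLinear (ℓ v)))
  exact measure_add_lt_measure_add_of_isMaxOn volume hℓ
    (S.finite_toSet.isCompact_convexHull (𝕜 := ℝ).measure_lt_top.ne) hK hKc hK0
    (subset_convexHull ℝ _ hv) (subset_convexHull ℝ _ hw) hvw hvmax hwv

/-- Brunn–Minkowski-type inequality for convex polygons in the plane: if `P` and `Q` are
convex hulls of nonempty finite subsets of `ℝ²`, then
`vol(P + Q) ≥ vol(P) + vol(Q)`, with equality if and only if `P` is a singleton, `Q` is a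
singleton, or `P` and `Q` are contained in parallel lines. -/
theorem volume_minkowski_sum_ge (S T : Finset (ℝ × ℝ))
    (hS : S.Nonempty) (hT : T.Nonempty)
    (P Q : Set (ℝ × ℝ))
    (hP : P = convexHull ℝ (S : Set (ℝ × ℝ)))
    (hQ : Q = convexHull ℝ (T : Set (ℝ × ℝ))) :
    volume P + volume Q ≤ volume (P + Q) ∧
    (volume (P + Q) = volume P + volume Q ↔
      (∃ a, P = {a}) ∨ (∃ b, Q = {b}) ∨
      (∃ u : ℝ × ℝ, u ≠ 0 ∧ ∃ a b : ℝ × ℝ,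
        P ⊆ {x | ∃ r : ℝ, x = a + r • u} ∧ Q ⊆ {x | ∃ r : ℝ, x = b + r • u})) := by
  have hPc : Convex ℝ P := hP ▸ convex_convexHull ℝ _
  have hQc : Convex ℝ Q := hQ ▸ convex_convexHull ℝ _
  have hPk : IsCompact P := hP ▸ S.finite_toSet.isCompact_convexHull (𝕜 := ℝ)
  have hQk : IsCompact Q := hQ ▸ T.finite_toSet.isCompact_convexHull (𝕜 := ℝ)
  have hPne : P.Nonempty := hP ▸ convexHull_nonempty_iff.2 (Finset.coe_nonempty.2 hS)
  have hQne : Q.Nonempty := hQ ▸ convexHull_nonempty_iff.2 (Finset.coe_nonempty.2 hT)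
  have hdim : Module.finrank ℝ (ℝ × ℝ) = 2 := by simp
  refine ⟨measure_add_le_measure_add volume hPk hQk hPne hQne, fun hEq => ?_, ?_⟩
  · refine or_iff_not_imp_left.2 fun hP1 => or_iff_not_imp_left.2 fun hQ1 => ?_
    have hPnt := hPne.exists_eq_singleton_or_nontrivial.resolve_left hP1
    have hQnt := hQne.exists_eq_singleton_or_nontrivial.resolve_left hQ1
    have hP0 : volume P = 0 := by
      by_contra hP0
      have := volume_convexHull_add_lt (hQ ▸ hQnt) hPk hPc hP0
      rw [← hQ, add_comm Q, hEq, add_comm] at this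
      exact this.false
    have hQ0 : volume Q = 0 := by
      by_contra hQ0
      have := volume_convexHull_add_lt (hP ▸ hPnt) hQk hQc hQ0
      rw [← hP, hEq] at this
      exact this.false
    obtain ⟨p, hp⟩ := hPne
    obtain ⟨q, hq⟩ := hQne
    obtain ⟨u, hu, hPu, hQu⟩ := exists_subset_parallel_lines_of_measure_add_eq_zero volume hdim
      (hPc.add hQc) (by rw [hEq, hP0, hQ0, add_zero]) hp hq
    exact ⟨u, hu, p, q, hPu, hQu⟩
  · rintro (⟨a, rfl⟩ | ⟨b, rfl⟩ | ⟨u, -, a, b, hPu, hQu⟩)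
    · rw [singleton_add, image_add_left, measure_preimage_add, measure_singleton, zero_add]
    · rw [add_singleton, image_add_right, measure_preimage_add_right, measure_singleton, add_zero]
    · exact measure_add_eq_of_subset_parallel_lines volume hdim.ge hPu hQu
end

section
/- Let (p, q) and (p′, q′) be two pairs of coprime integers (each pair not both zero) with p·q′ − q·p′ ≠ 0, and let (x₀, y₀) and (x₀′, y₀′) be points of the torus (ℝ/ℤ)². Let C = { (x₀ + t·p, y₀ + t·q) mod ℤ² : t ∈ ℝ } and C′ = { (x₀′ + t·p′, y₀′ + t·q′) mod ℤ² : t ∈ ℝ } be the corresponding closed geodesics of the flat torus. Then the intersection C ∩ C′ is a finite set with exactly |p·q′ − q·p′| elements. -/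
/-!
Both geodesics are cosets of the one-parameter circle subgroups `H = {t • (p, q)}` and
`H' = {s • (p', q')}` of the torus. As `d = p q' - q p' ≠ 0`, Cramer's rule shows that they
meet and that `H ∩ H'` consists of the points `t • (p, q)` with `t ∈ (1/d) ℤ` (every integer
is `m q' - n p'` since `(p', q')` is coprime). So `C ∩ C'` is a coset of the cyclic group
generated by `(1/d) • (p, q)`, whose order is `|d|` because `t • (p, q) = 0` only for integral
`t` when `(p, q)` is coprime.
-/

open Pointwise

local notation "𝕋" => AddCircle (1 : ℝ)

theorem AddSubgroup.vadd_coe_inter_vadd_coe_eq {G : Type*} [AddGroup G] {H K : AddSubgroup G}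
    {x y z : G} (hx : z ∈ x +ᵥ (H : Set G)) (hy : z ∈ y +ᵥ (K : Set G)) :
    (x +ᵥ (H : Set G)) ∩ (y +ᵥ (K : Set G)) = z +ᵥ ((H ⊓ K : AddSubgroup G) : Set G) := by
  rw [AddSubgroup.coe_inf, Set.vadd_set_inter]
  rw [mem_leftAddCoset_iff] at hx hy
  rw [(leftAddCoset_eq_iff H).mpr hx, (leftAddCoset_eq_iff K).mpr hy]

theorem AddCircle.coe_eq_coe_iff_exists_int {x y : ℝ} :
    (x : 𝕋) = y ↔ ∃ n : ℤ, x - y = n := by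
  rw [← sub_eq_zero, ← AddCircle.coe_sub, AddCircle.coe_eq_zero_iff]
  simp only [zsmul_one, eq_comm]

/-- The geodesic with code `(p, q)` through `x` is `x +ᵥ range (torusLine p q)`. -/
noncomputable def torusLine (p q : ℤ) : ℝ →+ 𝕋 × 𝕋 :=
  ((QuotientAddGroup.mk' _).comp (AddMonoidHom.mulRight (p : ℝ))).prod
    ((QuotientAddGroup.mk' _).comp (AddMonoidHom.mulRight (q : ℝ)))

theorem torusLine_apply (p q : ℤ) (t : ℝ) :
    torusLine p q t = (((t * p : ℝ) : 𝕋), ((t * q : ℝ) : 𝕋)) := rfl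

theorem torusLine_eq_torusLine_iff {p q p' q' : ℤ} {t s : ℝ} :
    torusLine p q t = torusLine p' q' s ↔
      ∃ m n : ℤ, t * p - s * p' = m ∧ t * q - s * q' = n := by
  simp only [torusLine_apply, Prod.ext_iff, AddCircle.coe_eq_coe_iff_exists_int]
  exact exists_and_exists_comm

theorem torusLine_eq_zero_iff {p q : ℤ} (hpq : IsCoprime p q) {t : ℝ} :
    torusLine p q t = 0 ↔ ∃ k : ℤ, t = k := by
  simp only [torusLine_apply, Prod.mk_eq_zero, AddCircle.coe_eq_zero_iff, zsmul_one]
  constructor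
  · rintro ⟨⟨m, hm⟩, ⟨n, hn⟩⟩
    obtain ⟨u, v, huv⟩ := hpq
    refine ⟨u * m + v * n, ?_⟩
    have huv' : (u : ℝ) * p + v * q = 1 := by exact_mod_cast huv
    push_cast
    linear_combination -(u : ℝ) * hm - v * hn - t * huv'
  · rintro ⟨k, rfl⟩
    exact ⟨⟨k * p, by push_cast; rfl⟩, ⟨k * q, by push_cast; rfl⟩⟩

theorem addOrderOf_torusLine_inv {p q : ℤ} (hpq : IsCoprime p q) {d : ℤ} (hd : d ≠ 0) :
    addOrderOf (torusLine p q (d : ℝ)⁻¹) = d.natAbs := by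
  have hdR : (d : ℝ) ≠ 0 := Int.cast_ne_zero.mpr hd
  have key : ∀ j : ℤ, (addOrderOf (torusLine p q (d : ℝ)⁻¹) : ℤ) ∣ j ↔ d ∣ j := by
    intro j
    rw [addOrderOf_dvd_iff_zsmul_eq_zero, ← map_zsmul, torusLine_eq_zero_iff hpq]
    constructor
    · rintro ⟨k, hk⟩
      refine ⟨k, ?_⟩
      rw [zsmul_eq_mul, ← div_eq_mul_inv, div_eq_iff hdR] at hk
      exact_mod_cast hk.trans (mul_comm _ _)
    · rintro ⟨k, rfl⟩
      exact ⟨k, by rw [zsmul_eq_mul]; push_cast; field_simp⟩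
  exact Nat.dvd_antisymm (Int.natCast_dvd.mp ((key _).mpr dvd_rfl))
    (Int.dvd_natCast.mp ((key _).mp dvd_rfl))

theorem range_torusLine_inf_range_torusLine {p q p' q' : ℤ} (hpq' : IsCoprime p' q')
    (hd : p * q' - q * p' ≠ 0) :
    (torusLine p q).range ⊓ (torusLine p' q').range =
      AddSubgroup.zmultiples (torusLine p q ((p * q' - q * p' : ℤ) : ℝ)⁻¹) := by
  set d : ℝ := ((p * q' - q * p' : ℤ) : ℝ) with hd_def
  have hdR : d ≠ 0 := Int.cast_ne_zero.mpr hd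
  have hd_eq : d = p * q' - q * p' := by rw [hd_def]; push_cast; ring
  apply le_antisymm
  · rintro _ ⟨⟨t, rfl⟩, ⟨s, hs⟩⟩
    obtain ⟨m, n, hm, hn⟩ := torusLine_eq_torusLine_iff.mp hs.symm
    refine AddSubgroup.mem_zmultiples_iff.mpr ⟨m * q' - n * p', ?_⟩
    rw [← map_zsmul, zsmul_eq_mul]
    congr 1
    field_simp
    push_cast
    linear_combination -(q' : ℝ) * hm + p' * hn - t * hd_eq
  · rw [AddSubgroup.zmultiples_le]
    refine ⟨⟨_, rfl⟩, ?_⟩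
    obtain ⟨u, v, huv⟩ := hpq'
    have huv' : (u : ℝ) * p' + v * q' = 1 := by exact_mod_cast huv
    -- Cramer's rule for `s • (p', q') - t • (p, q) = (-v, u)`, whose solution has `t = 1 / d`
    refine ⟨(v * q + u * p) / d, torusLine_eq_torusLine_iff.mpr ⟨-v, u, ?_, ?_⟩⟩
    · field_simp
      push_cast
      linear_combination (p : ℝ) * huv' + v * hd_eq
    · field_simp
      linear_combination (q : ℝ) * huv' - u * hd_eq

theorem exists_torusLine_sub_torusLine_eq {p q p' q' : ℤ} (hd : p * q' - q * p' ≠ 0)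
    (z : 𝕋 × 𝕋) :
    ∃ t s : ℝ, torusLine p q t - torusLine p' q' s = z := by
  obtain ⟨x, y⟩ := z
  obtain ⟨a, rfl⟩ := QuotientAddGroup.mk_surjective x
  obtain ⟨b, rfl⟩ := QuotientAddGroup.mk_surjective y
  set d : ℝ := p * q' - q * p' with hd_def
  have hdR : d ≠ 0 := by rw [hd_def]; exact_mod_cast hd
  refine ⟨(a * q' - b * p') / d, (a * q - b * p) / d, ?_⟩
  rw [torusLine_apply, torusLine_apply, Prod.mk_sub_mk, ← AddCircle.coe_sub, ← AddCircle.coe_sub]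
  congr 2
  · field_simp
    linear_combination a * hd_def
  · field_simp
    linear_combination b * hd_def

/-- Two closed geodesics of the flat torus `(ℝ/ℤ)²`, with coprime codes `(p, q)` and
`(p′, q′)` satisfying `p·q′ − q·p′ ≠ 0`, intersect in a finite set with exactly
`|p·q′ − q·p′|` elements. -/
theorem flatTorus_geodesics_intersection_card
    (p q p' q' : ℤ) (h : Int.gcd p q = 1) (h' : Int.gcd p' q' = 1)
    (hd : p * q' - q * p' ≠ 0)
    (x₀ y₀ x₀' y₀' : AddCircle (1 : ℝ))
    (C C' : Set (AddCircle (1 : ℝ) × AddCircle (1 : ℝ)))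
    (hC : C = Set.range (fun t : ℝ =>
      (x₀ + ((t * (p : ℝ) : ℝ) : AddCircle (1 : ℝ)),
       y₀ + ((t * (q : ℝ) : ℝ) : AddCircle (1 : ℝ)))))
    (hC' : C' = Set.range (fun t : ℝ =>
      (x₀' + ((t * (p' : ℝ) : ℝ) : AddCircle (1 : ℝ)),
       y₀' + ((t * (q' : ℝ) : ℝ) : AddCircle (1 : ℝ))))) :
    (C ∩ C').Finite ∧ (C ∩ C').ncard = (p * q' - q * p').natAbs := by
  have hC_coset : C = (x₀, y₀) +ᵥ ((torusLine p q).range : Set (𝕋 × 𝕋)) := by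
    rw [hC, AddMonoidHom.coe_range, Set.vadd_set_range]; rfl
  have hC'_coset : C' = (x₀', y₀') +ᵥ ((torusLine p' q').range : Set (𝕋 × 𝕋)) := by
    rw [hC', AddMonoidHom.coe_range, Set.vadd_set_range]; rfl
  obtain ⟨t, s, hts⟩ := exists_torusLine_sub_torusLine_eq hd ((x₀', y₀') - (x₀, y₀))
  have hmeet : (x₀, y₀) + torusLine p q t = (x₀', y₀') + torusLine p' q' s := by
    rw [← sub_eq_sub_iff_add_eq_add.mp hts]; abel
  have hmem : (x₀, y₀) + torusLine p q t ∈ (x₀, y₀) +ᵥ ((torusLine p q).range : Set (𝕋 × 𝕋)) :=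
    Set.vadd_mem_vadd_set (AddMonoidHom.mem_range.mpr ⟨t, rfl⟩)
  have hmem' :
      (x₀, y₀) + torusLine p q t ∈ (x₀', y₀') +ᵥ ((torusLine p' q').range : Set (𝕋 × 𝕋)) := by
    rw [hmeet]; exact Set.vadd_mem_vadd_set (AddMonoidHom.mem_range.mpr ⟨s, rfl⟩)
  have hcard : (C ∩ C').ncard = (p * q' - q * p').natAbs := by
    rw [hC_coset, hC'_coset, AddSubgroup.vadd_coe_inter_vadd_coe_eq hmem hmem',
      range_torusLine_inf_range_torusLine (Int.isCoprime_iff_gcd_eq_one.mpr h') hd,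
      Set.ncard_vadd_set, ← Nat.card_coe_set_eq, SetLike.coe_sort_coe, Nat.card_zmultiples,
      addOrderOf_torusLine_inv (Int.isCoprime_iff_gcd_eq_one.mpr h) hd]
  exact ⟨Set.finite_of_ncard_pos (hcard ▸ Int.natAbs_pos.mpr hd), hcard⟩
end
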